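/- arXiv:2309.11377 — 2 statements merged into one kernel-verified Lean document; each statement's English description precedes it below -/
import Mathlib

section
/- Let H be the 4×4 symmetric matrix H = [[−mL, mL, m, −L],[mL, −mL, −m, L],[m, −m, −1, 1],[−L, L, 1, −1]] and h = 2(L−m)·(1, −1). Then for any f that is m-strongly convex with L-Lipschitz gradient and any points y_i, y_j ∈ ℝ^d, with v = (y_i, y_j, ∇f(y_i), ∇f(y_j)) stacked as a 4×d matrix, trace(vᵀHv) + hᵀ(f(y_i), f(y_j)) ≥ 0. -/
open Matrix
open RealInnerProductSpace

section Aux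

variable {d : ℕ}

private lemma line_hasDerivAt {f : EuclideanSpace ℝ (Fin d) → ℝ}
    {g : EuclideanSpace ℝ (Fin d) → EuclideanSpace ℝ (Fin d)}
    (hg : ∀ x, HasGradientAt f (g x) x) (x dd : EuclideanSpace ℝ (Fin d)) (t : ℝ) :
    HasDerivAt (fun s : ℝ => f (x + s • dd)) ⟪g (x + t • dd), dd⟫ t := by
  have hline : HasDerivAt (fun s : ℝ => x + s • dd) dd t := by
    simpa using ((hasDerivAt_id t).smul_const dd).const_add x
  have hf : HasFDerivAt f (InnerProductSpace.toDual ℝ _ (g (x + t • dd))) (x + t • dd) := hg _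
  exact hf.comp_hasDerivAt t hline

private lemma descent {f : EuclideanSpace ℝ (Fin d) → ℝ}
    {g : EuclideanSpace ℝ (Fin d) → EuclideanSpace ℝ (Fin d)}
    (hg : ∀ x, HasGradientAt f (g x) x) {L : ℝ}
    (hlip : ∀ x y, ‖g x - g y‖ ≤ L * ‖x - y‖) (x z : EuclideanSpace ℝ (Fin d)) :
    f z ≤ f x + ⟪g x, z - x⟫ + L / 2 * ‖z - x‖ ^ 2 := by
  set dd := z - x with hdd
  set q : ℝ → ℝ := fun t => f x + t * ⟪g x, dd⟫ + t ^ 2 * (L / 2 * ‖dd‖ ^ 2) - f (x + t • dd)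
    with hq
  have hderiv : ∀ t : ℝ, HasDerivAt q
      (⟪g x, dd⟫ + 2 * t * (L / 2 * ‖dd‖ ^ 2) - ⟪g (x + t • dd), dd⟫) t := by
    intro t
    have c1 : HasDerivAt (fun s : ℝ => s * ⟪g x, dd⟫) ⟪g x, dd⟫ t := by
      simpa using hasDerivAt_mul_const (⟪g x, dd⟫ : ℝ) (x := t)
    have c2 : HasDerivAt (fun s : ℝ => s ^ 2 * (L / 2 * ‖dd‖ ^ 2))
        (2 * t * (L / 2 * ‖dd‖ ^ 2)) t := by
      have := (hasDerivAt_pow 2 t).mul_const (L / 2 * ‖dd‖ ^ 2)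
      simpa [mul_comm] using this
    have c3 := (((hasDerivAt_const t (f x)).add c1).add c2).sub (line_hasDerivAt hg x dd t)
    refine c3.congr_deriv ?_
    ring
  have hmono : MonotoneOn q (Set.Icc (0:ℝ) 1) := by
    apply monotoneOn_of_deriv_nonneg (convex_Icc 0 1)
    · exact fun t _ => ((hderiv t).continuousAt.continuousWithinAt)
    · exact fun t _ => ((hderiv t).differentiableAt).differentiableWithinAt
    · intro t ht
      rw [interior_Icc] at ht
      rw [(hderiv t).deriv]
      have h2 : ⟪g (x + t • dd) - g x, dd⟫ ≤ ‖g (x + t • dd) - g x‖ * ‖dd‖ :=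
        real_inner_le_norm _ _
      have h3 : ‖g (x + t • dd) - g x‖ ≤ L * ‖t • dd‖ := by
        simpa using hlip (x + t • dd) x
      have h4 : ‖t • dd‖ = t * ‖dd‖ := by
        rw [norm_smul, Real.norm_eq_abs, abs_of_nonneg ht.1.le]
      rw [inner_sub_left] at h2
      have h5 := mul_le_mul_of_nonneg_right h3 (norm_nonneg dd)
      rw [h4] at h5
      nlinarith [h2, h5]
  have h01 := hmono (Set.left_mem_Icc.mpr zero_le_one) (Set.right_mem_Icc.mpr zero_le_one)
    zero_le_one
  have hq0 : q 0 = 0 := by simp [hq]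
  have hq1 : q 1 = f x + ⟪g x, dd⟫ + L / 2 * ‖dd‖ ^ 2 - f z := by
    simp [hq, hdd]
  rw [hq0, hq1] at h01
  linarith

private lemma lower {f : EuclideanSpace ℝ (Fin d) → ℝ}
    {g : EuclideanSpace ℝ (Fin d) → EuclideanSpace ℝ (Fin d)}
    (hg : ∀ x, HasGradientAt f (g x) x) {m : ℝ}
    (hsc : ConvexOn ℝ Set.univ (fun x => f x - m / 2 * ‖x‖ ^ 2))
    (x z : EuclideanSpace ℝ (Fin d)) :
    f x - m / 2 * ‖x‖ ^ 2 + (⟪g x, z - x⟫ - m * ⟪x, z - x⟫) ≤ f z - m / 2 * ‖z‖ ^ 2 := by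
  set dd := z - x with hdd
  set q : ℝ → ℝ := fun t => f (x + t • dd) - m / 2 * ‖x + t • dd‖ ^ 2 with hq
  have hlm : ∀ t : ℝ, (AffineMap.lineMap x z : ℝ →ᵃ[ℝ] _) t = x + t • dd := by
    intro t
    simp [AffineMap.lineMap_apply, hdd, add_comm]
  have hconv : ConvexOn ℝ Set.univ q := by
    have h := hsc.comp_affineMap (AffineMap.lineMap x z : ℝ →ᵃ[ℝ] _)
    have : ((AffineMap.lineMap x z : ℝ →ᵃ[ℝ] _) ⁻¹' Set.univ) = Set.univ := Set.preimage_univ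
    rw [this] at h
    suffices hqe : q = (fun x => f x - m / 2 * ‖x‖ ^ 2) ∘ ⇑(AffineMap.lineMap x z : ℝ →ᵃ[ℝ] _) by
      rw [hqe]; exact h
    funext t
    simp [hq, Function.comp, hlm t]
  have hd0 : HasDerivAt q (⟪g x, dd⟫ - m * ⟪x, dd⟫) 0 := by
    have h1 := line_hasDerivAt hg x dd 0
    rw [zero_smul, add_zero] at h1
    have h2 : HasDerivAt (fun s : ℝ => m / 2 * ‖x + s • dd‖ ^ 2) (m * ⟪x, dd⟫) 0 := by
      have hexp : (fun s : ℝ => m / 2 * ‖x + s • dd‖ ^ 2)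
          = fun s : ℝ => m / 2 * (‖x‖ ^ 2 + 2 * (s * ⟪x, dd⟫) + s ^ 2 * ‖dd‖ ^ 2) := by
        funext s
        rw [norm_add_sq_real, real_inner_smul_right, norm_smul, Real.norm_eq_abs, mul_pow,
          sq_abs]
      rw [hexp]
      have c1 : HasDerivAt (fun s : ℝ => s * ⟪x, dd⟫) ⟪x, dd⟫ 0 := by
        simpa using hasDerivAt_mul_const (⟪x, dd⟫ : ℝ) (x := (0:ℝ))
      have c2 : HasDerivAt (fun s : ℝ => s ^ 2 * ‖dd‖ ^ 2) 0 (0:ℝ) := by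
        have := (hasDerivAt_pow 2 (0:ℝ)).mul_const (‖dd‖ ^ 2)
        simpa using this
      have c3 := (((hasDerivAt_const (0:ℝ) (‖x‖ ^ 2)).add (c1.const_mul 2)).add c2).const_mul
        (m / 2)
      refine c3.congr_deriv ?_
      ring
    exact h1.sub h2
  have hs := hconv.le_slope_of_hasDerivAt (Set.mem_univ (0:ℝ)) (Set.mem_univ (1:ℝ))
    zero_lt_one hd0
  have hq0 : q 0 = f x - m / 2 * ‖x‖ ^ 2 := by simp [hq]
  have hq1 : q 1 = f z - m / 2 * ‖z‖ ^ 2 := by simp [hq, hdd]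
  rw [slope_def_field, hq0, hq1] at hs
  rw [show ((1:ℝ) - 0) = 1 by norm_num, div_one] at hs
  linarith [hs]

set_option maxHeartbeats 1000000 in
private lemma key {f : EuclideanSpace ℝ (Fin d) → ℝ}
    {g : EuclideanSpace ℝ (Fin d) → EuclideanSpace ℝ (Fin d)}
    (hg : ∀ x, HasGradientAt f (g x) x) {m L : ℝ} (hm : 0 < m) (hmL : m ≤ L)
    (hsc : ConvexOn ℝ Set.univ (fun x => f x - m / 2 * ‖x‖ ^ 2))
    (hlip : ∀ x y, ‖g x - g y‖ ≤ L * ‖x - y‖) (x y : EuclideanSpace ℝ (Fin d)) :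
    ‖(g x - m • x) - (g y - m • y)‖ ^ 2
      ≤ 2 * (L - m) * ((f y - m / 2 * ‖y‖ ^ 2) - (f x - m / 2 * ‖x‖ ^ 2)
          - ⟪g x - m • x, y - x⟫) := by
  obtain ⟨A, hA⟩ : ∃ A, A = g x - m • x := ⟨_, rfl⟩
  obtain ⟨B, hB⟩ : ∃ B, B = g y - m • y := ⟨_, rfl⟩
  obtain ⟨M, hM⟩ : ∃ M : ℝ, M = L - m := ⟨_, rfl⟩
  rw [← hA, ← hB, ← hM]
  obtain ⟨u, hu⟩ : ∃ u, u = A - B := ⟨_, rfl⟩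
  rw [← hu]
  have hMnn : 0 ≤ M := by rw [hM]; linarith
  have hC : ∀ z, (f x - m / 2 * ‖x‖ ^ 2) + ⟪A, z - x⟫
      ≤ (f y - m / 2 * ‖y‖ ^ 2) + ⟪B, z - y⟫ + M / 2 * ‖z - y‖ ^ 2 := by
    intro z
    have h1 := lower hg hsc x z
    have h2 := descent hg hlip y z
    have h3 : ‖z‖ ^ 2 = ‖y‖ ^ 2 + 2 * ⟪y, z - y⟫ + ‖z - y‖ ^ 2 := by
      have := norm_add_sq_real y (z - y)
      simpa using this
    have e1 : ⟪A, z - x⟫ = ⟪g x, z - x⟫ - m * ⟪x, z - x⟫ := by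
      rw [hA, inner_sub_left, real_inner_smul_left]
    have e2 : ⟪B, z - y⟫ = ⟪g y, z - y⟫ - m * ⟪y, z - y⟫ := by
      rw [hB, inner_sub_left, real_inner_smul_left]
    rw [e1, e2, hM]
    nlinarith [h1, h2, h3]
  have hCc : ∀ c : ℝ, (f x - m / 2 * ‖x‖ ^ 2) + ⟪A, y - x⟫ + c * ‖u‖ ^ 2
      ≤ (f y - m / 2 * ‖y‖ ^ 2) + M * c ^ 2 / 2 * ‖u‖ ^ 2 := by
    intro c
    have hz := hC (y + c • u)
    have e1 : (y + c • u) - x = (y - x) + c • u := by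
      rw [add_sub_right_comm]
    have e2 : (y + c • u) - y = c • u := add_sub_cancel_left y _
    rw [e1, e2, inner_add_right, real_inner_smul_right, real_inner_smul_right, norm_smul,
      Real.norm_eq_abs, mul_pow, sq_abs] at hz
    have hinner : ⟪A, u⟫ = ⟪B, u⟫ + ‖u‖ ^ 2 := by
      have h5 : ⟪A, u⟫ - ⟪B, u⟫ = ⟪u, u⟫ := by rw [← inner_sub_left, hu]
      rw [real_inner_self_eq_norm_sq] at h5
      linarith
    rw [hinner] at hz
    nlinarith [hz]
  obtain ⟨D, hD⟩ : ∃ D : ℝ, D = (f y - m / 2 * ‖y‖ ^ 2) - (f x - m / 2 * ‖x‖ ^ 2)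
      - ⟪A, y - x⟫ := ⟨_, rfl⟩
  rw [← hD]
  have hD0 : 0 ≤ D := by
    have h0 := hCc 0
    rw [hD]; nlinarith [h0]
  have hN : 0 ≤ ‖u‖ ^ 2 := sq_nonneg _
  rcases hMnn.eq_or_lt' with hM0 | hMpos
  · -- case M = 0
    rw [hM0]
    by_contra hcon
    push_neg at hcon
    have hupos : 0 < ‖u‖ ^ 2 := by nlinarith [hcon]
    have hc := hCc ((D + 1) / ‖u‖ ^ 2)
    rw [hM0] at hc
    have hmul : (D + 1) / ‖u‖ ^ 2 * ‖u‖ ^ 2 = D + 1 := div_mul_cancel₀ _ (ne_of_gt hupos)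
    rw [hmul] at hc
    linarith [hc, hD]
  · -- case 0 < M
    have hMne : M ≠ 0 := ne_of_gt hMpos
    have hz := hCc (1 / M)
    have hMc : M * (1 / M) ^ 2 = 1 / M := by field_simp
    have hMc2 : M * (1 / M) = 1 := by field_simp
    have h6 : 1 / M * ‖u‖ ^ 2 / 2 ≤ D := by
      rw [hD]
      nlinarith [hz, hMc]
    nlinarith [h6, hMpos, hMc2, hN]

end Aux

/-- Trace form of the interpolation inequality:
trace(vᵀ H v) + hᵀ (f_i, f_j) ≥ 0 for the interpolation matrix H. -/
theorem interpolation_trace_form (d : ℕ) (m L : ℝ) (hm : 0 < m) (hmL : m ≤ L)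
    (f : EuclideanSpace ℝ (Fin d) → ℝ) (g : EuclideanSpace ℝ (Fin d) → EuclideanSpace ℝ (Fin d))
    (hg : ∀ x, HasGradientAt f (g x) x)
    (hsc : ConvexOn ℝ Set.univ (fun x => f x - m / 2 * ‖x‖ ^ 2))
    (hlip : ∀ x y, ‖g x - g y‖ ≤ L * ‖x - y‖)
    (yi yj : EuclideanSpace ℝ (Fin d))
    (H : Matrix (Fin 4) (Fin 4) ℝ)
    (hH : H = !![-(m*L), m*L, m, -L; m*L, -(m*L), -m, L; m, -m, -1, 1; -L, L, 1, -1])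
    (h : Fin 2 → ℝ) (hh : h = (2 * (L - m)) • ![1, -1])
    (v : Matrix (Fin 4) (Fin d) ℝ) (hv : v = Matrix.of ![yi, yj, g yi, g yj]) :
    Matrix.trace (vᵀ * H * v) + h ⬝ᵥ ![f yi, f yj] ≥ 0 := by
  subst hH hh hv
  have hkey := key hg hm hmL hsc hlip yj yi
  -- expand hkey into inner-product atoms
  have hnorm1 : ‖(g yj - m • yj) - (g yi - m • yi)‖ ^ 2
      = ⟪(g yj - m • yj) - (g yi - m • yi), (g yj - m • yj) - (g yi - m • yi)⟫ :=
    (real_inner_self_eq_norm_sq _).symm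
  have hnorm2 : ‖yi‖ ^ 2 = ⟪yi, yi⟫ := (real_inner_self_eq_norm_sq _).symm
  have hnorm3 : ‖yj‖ ^ 2 = ⟪yj, yj⟫ := (real_inner_self_eq_norm_sq _).symm
  rw [hnorm1, hnorm2, hnorm3] at hkey
  simp only [inner_sub_left, inner_sub_right, real_inner_smul_left, real_inner_smul_right]
    at hkey
  have ht : Matrix.trace ((Matrix.of ![yi, yj, g yi, g yj])ᵀ
        * !![-(m*L), m*L, m, -L; m*L, -(m*L), -m, L; m, -m, -1, 1; -L, L, 1, -1]
        * Matrix.of ![yi, yj, g yi, g yj])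
      = (-(m*L)) * ⟪yi, yi⟫ + (2*(m*L)) * ⟪yi, yj⟫ + (-(m*L)) * ⟪yj, yj⟫
        + (2*m) * ⟪yi, g yi⟫ + (-(2*m)) * ⟪yj, g yi⟫ + (-(2*L)) * ⟪yi, g yj⟫
        + (2*L) * ⟪yj, g yj⟫ + (-1) * ⟪g yi, g yi⟫ + 2 * ⟪g yi, g yj⟫
        + (-1) * ⟪g yj, g yj⟫ := by
    simp only [Matrix.trace, Matrix.diag_apply, Matrix.mul_apply, Matrix.transpose_apply,
      Fin.sum_univ_four, PiLp.inner_apply, RCLike.inner_apply, conj_trivial,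
      Matrix.of_apply, Matrix.cons_val', Matrix.cons_val_zero, Matrix.cons_val_one,
      Matrix.head_cons, Matrix.empty_val', Matrix.cons_val_fin_one, Matrix.head_fin_const,
      Matrix.cons_val_two, Matrix.cons_val_three, Matrix.tail_cons]
    simp only [Finset.mul_sum, ← Finset.sum_add_distrib]
    apply Finset.sum_congr rfl
    intro k _
    ring
  rw [ht]
  have hdot : ((2 * (L - m)) • ![(1:ℝ), -1]) ⬝ᵥ ![f yi, f yj]
      = 2 * (L - m) * (f yi - f yj) := by
    simp [dotProduct, Fin.sum_univ_two]
    ring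
  rw [hdot]
  have hc1 : ⟪yj, yi⟫ = ⟪yi, yj⟫ := real_inner_comm _ _
  have hc2 : ⟪g yi, yi⟫ = ⟪yi, g yi⟫ := real_inner_comm _ _
  have hc3 : ⟪g yi, yj⟫ = ⟪yj, g yi⟫ := real_inner_comm _ _
  have hc4 : ⟪g yj, yi⟫ = ⟪yi, g yj⟫ := real_inner_comm _ _
  have hc5 : ⟪g yj, yj⟫ = ⟪yj, g yj⟫ := real_inner_comm _ _
  have hc6 : ⟪g yj, g yi⟫ = ⟪g yi, g yj⟫ := real_inner_comm _ _
  rw [hc1, hc2, hc3, hc4, hc5, hc6] at hkey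
  linarith [hkey]
end

section
/- For any m-strongly convex f with L-Lipschitz gradient and minimizer y⋆ (so ∇f(y⋆) = 0), setting u = ∇f(y): 2(L−m)(f(y) − f(y⋆)) − mL‖y − y⋆‖² + 2m·uᵀ(y − y⋆) − ‖u‖² ≥ 0 and 2(L−m)(f(y⋆) − f(y)) − mL‖y − y⋆‖² + 2L·uᵀ(y − y⋆) − ‖u‖² ≥ 0. -/
open InnerProductSpace

variable {E : Type*} [NormedAddCommGroup E] [InnerProductSpace ℝ E] [CompleteSpace E]

local notation "⟪" x ", " y "⟫" => @inner ℝ _ _ x y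

lemma hasDerivAt_line {φ : E → ℝ} {G : E} (y r : E) (t : ℝ)
    (h : HasGradientAt φ G (y + t • r)) :
    HasDerivAt (fun s : ℝ => φ (y + s • r)) ⟪G, r⟫ t := by
  have hc : HasDerivAt (fun s : ℝ => y + s • r) r t := by
    simpa using ((hasDerivAt_id t).smul_const r).const_add y
  have hf := hasGradientAt_iff_hasFDerivAt.mp h
  have := hf.comp_hasDerivAt t hc
  simpa [InnerProductSpace.toDual_apply_apply, Function.comp_def] using this

/-- first-order lower bound for convex functions -/
lemma convex_lower {φ : E → ℝ} {G : E → E} (hφ : ConvexOn ℝ Set.univ φ)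
    (hG : ∀ x, HasGradientAt φ (G x) x) (x y : E) :
    φ y + ⟪G y, x - y⟫ ≤ φ x := by
  have hψ : ConvexOn ℝ Set.univ (fun s : ℝ => φ (y + s • (x - y))) := by
    have := hφ.comp_affineMap (AffineMap.lineMap y x : ℝ →ᵃ[ℝ] E)
    simp only [AffineMap.coe_lineMap, Set.preimage_univ] at this
    convert this using 2 with s
    case e'_12 =>
      simp [AffineMap.lineMap_apply_module]
      abel_nf
    all_goals rfl
  have hd : HasDerivAt (fun s : ℝ => φ (y + s • (x - y))) ⟪G y, x - y⟫ 0 := by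
    have := hasDerivAt_line (φ := φ) y (x - y) 0 (by simpa using hG y)
    simpa using this
  have := hψ.le_slope_of_hasDerivAt (Set.mem_univ 0) (Set.mem_univ 1) one_pos hd
  simp [slope_def_field] at this
  linarith

/-- descent lemma -/
lemma descent_s18 {φ : E → ℝ} {G : E → E} {K : ℝ} (hK : 0 ≤ K)
    (hG : ∀ x, HasGradientAt φ (G x) x)
    (hlip : ∀ x y, ‖G x - G y‖ ≤ K * ‖x - y‖) (x y : E) :
    φ x ≤ φ y + ⟪G y, x - y⟫ + K / 2 * ‖x - y‖ ^ 2 := by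
  set r := x - y with hr
  set χ : ℝ → ℝ := fun t => φ (y + t • r) - t * ⟪G y, r⟫ - K * t ^ 2 / 2 * ‖r‖ ^ 2 with hχ
  have hd : ∀ t : ℝ, HasDerivAt χ (⟪G (y + t • r), r⟫ - ⟪G y, r⟫ - K * t * ‖r‖ ^ 2) t := by
    intro t
    have h1 := hasDerivAt_line (φ := φ) y r t (hG _)
    have h2 : HasDerivAt (fun t : ℝ => t * ⟪G y, r⟫) ⟪G y, r⟫ t := by
      simpa using (hasDerivAt_id t).mul_const ⟪G y, r⟫
    have h3 : HasDerivAt (fun t : ℝ => K * t ^ 2 / 2 * ‖r‖ ^ 2) (K * t * ‖r‖ ^ 2) t := by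
      have : HasDerivAt (fun t : ℝ => t ^ 2) (2 * t) t := by
        simpa using hasDerivAt_pow 2 t
      have := ((this.const_mul K).div_const 2).mul_const (‖r‖ ^ 2)
      convert this using 1
      case e'_9 =>
        ring
      all_goals rfl
    simpa [hχ, Pi.sub_def] using (h1.sub h2).sub h3
  have hmono : AntitoneOn χ (Set.Icc 0 1) := by
    apply antitoneOn_of_deriv_nonpos (convex_Icc 0 1)
    · exact fun t _ => ((hd t).differentiableAt).continuousAt.continuousWithinAt
    · exact fun t _ => ((hd t).differentiableAt).differentiableWithinAt
    · intro t ht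
      rw [interior_Icc] at ht
      rw [(hd t).deriv]
      have hb : ⟪G (y + t • r) - G y, r⟫ ≤ K * t * ‖r‖ ^ 2 := by
        calc ⟪G (y + t • r) - G y, r⟫ ≤ ‖G (y + t • r) - G y‖ * ‖r‖ :=
              real_inner_le_norm _ _
          _ ≤ K * ‖(y + t • r) - y‖ * ‖r‖ := by
              gcongr; exact hlip _ _
          _ = K * t * ‖r‖ ^ 2 := by
              simp [norm_smul, abs_of_pos ht.1]; ring
      rw [inner_sub_left] at hb
      linarith
  have h01 := hmono (Set.mem_Icc.mpr ⟨le_refl 0, zero_le_one⟩)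
      (Set.mem_Icc.mpr ⟨zero_le_one, le_refl 1⟩) zero_le_one
  simp only [hχ] at h01
  simp at h01
  have hyx : y + r = x := by rw [hr]; abel
  rw [hyx] at h01
  linarith

/-- co-coercivity -/
lemma cocoercive {φ : E → ℝ} {G : E → E} {K : ℝ} (hK : 0 ≤ K)
    (hφ : ConvexOn ℝ Set.univ φ) (hG : ∀ x, HasGradientAt φ (G x) x)
    (hub : ∀ x y, φ x ≤ φ y + ⟪G y, x - y⟫ + K / 2 * ‖x - y‖ ^ 2) (x y : E) :
    ‖G x - G y‖ ^ 2 ≤ 2 * K * (φ x - φ y - ⟪G y, x - y⟫) := by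
  rcases eq_or_lt_of_le hK with h0 | hKpos
  · -- K = 0 : φ is affine, gradients agree
    have heq : ∀ a b : E, φ a = φ b + ⟪G b, a - b⟫ := by
      intro a b
      have h1 := hub a b
      have h2 := convex_lower hφ hG a b
      rw [← h0] at h1
      simp at h1
      linarith
    have hGxy : G x = G y := by
      have haff : ∀ a : E, HasGradientAt φ (G y) a := by
        intro a
        have : φ = fun z => (φ y - ⟪G y, y⟫) + ⟪G y, z⟫ := by
          funext z
          rw [heq z y, inner_sub_right]
          ring
        rw [this, hasGradientAt_iff_hasFDerivAt]
        have h := ((toDual ℝ E (G y)).hasFDerivAt (x := a)).const_add (φ y - ⟪G y, y⟫)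
        simpa [InnerProductSpace.toDual_apply_apply] using h
      exact (hG x).unique (haff x)
    rw [hGxy, ← h0]
    simp
  · -- K > 0
    set s := G x - G y with hs
    set z := x - K⁻¹ • s with hz
    have h1 := convex_lower hφ hG z y
    have h2 := hub z x
    have hzx : z - x = -(K⁻¹ • s) := by rw [hz]; abel
    have e1 : ⟪G x, z - x⟫ = -(K⁻¹ * ⟪G x, s⟫) := by
      rw [hzx, inner_neg_right, real_inner_smul_right]
    have e2 : ‖z - x‖ ^ 2 = K⁻¹ ^ 2 * ‖s‖ ^ 2 := by
      rw [hzx, norm_neg, norm_smul, mul_pow]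
      simp [abs_of_pos (inv_pos.mpr hKpos)]
    have e3 : ⟪G y, z - y⟫ = ⟪G y, x - y⟫ - K⁻¹ * ⟪G y, s⟫ := by
      have : z - y = (x - y) - K⁻¹ • s := by rw [hz]; abel
      rw [this, inner_sub_right, real_inner_smul_right]
    have e4 : ⟪G x, s⟫ - ⟪G y, s⟫ = ‖s‖ ^ 2 := by
      rw [← inner_sub_left, ← hs, real_inner_self_eq_norm_sq]
    rw [e3] at h1
    rw [e1, e2] at h2
    have hK' : K ≠ 0 := ne_of_gt hKpos
    have key : K⁻¹ * ‖s‖ ^ 2 - K / 2 * (K⁻¹ ^ 2 * ‖s‖ ^ 2) ≤ φ x - φ y - ⟪G y, x - y⟫ := by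
      have e5 : K⁻¹ * ⟪G x, s⟫ - K⁻¹ * ⟪G y, s⟫ = K⁻¹ * ‖s‖ ^ 2 := by
        rw [← mul_sub, e4]
      linarith
    have : K⁻¹ * ‖s‖ ^ 2 - K / 2 * (K⁻¹ ^ 2 * ‖s‖ ^ 2) = ‖s‖ ^ 2 / (2 * K) := by
      field_simp
      ring
    rw [this] at key
    rw [div_le_iff₀ (by positivity)] at key
    linarith

lemma hasGradientAt_half_norm_sq (c : ℝ) (x : E) :
    HasGradientAt (fun z : E => c / 2 * ‖z‖ ^ 2) (c • x) x := by
  rw [hasGradientAt_iff_hasFDerivAt]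
  have h1 := ((hasFDerivAt_id x).inner ℝ (hasFDerivAt_id x)).const_mul (c / 2)
  have heq : (fun z : E => c / 2 * ‖z‖ ^ 2) = fun z : E => c / 2 * ⟪z, z⟫ := by
    funext z; rw [real_inner_self_eq_norm_sq]
  rw [heq]
  convert h1 using 1
  case e'_11 => rfl
  case e'_12 =>
    ext v
    simp [fderivInnerCLM_apply, InnerProductSpace.toDual_apply_apply, real_inner_smul_left,
      real_inner_comm]
    ring
  all_goals rfl

/-- Interpolation inequalities specialized to (y, y⋆) and (y⋆, y), where y⋆
is the minimizer of f and u = ∇f(y). -/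
theorem interpolation_at_optimum (d : ℕ) (m L : ℝ) (hm : 0 < m) (hmL : m ≤ L)
    (f : EuclideanSpace ℝ (Fin d) → ℝ) (g : EuclideanSpace ℝ (Fin d) → EuclideanSpace ℝ (Fin d))
    (hg : ∀ x, HasGradientAt f (g x) x)
    (hsc : ConvexOn ℝ Set.univ (fun x => f x - m / 2 * ‖x‖ ^ 2))
    (hlip : ∀ x y, ‖g x - g y‖ ≤ L * ‖x - y‖)
    (ystar : EuclideanSpace ℝ (Fin d)) (hstar : g ystar = 0) :
    ∀ y : EuclideanSpace ℝ (Fin d),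
      2 * (L - m) * (f y - f ystar) - m * L * ‖y - ystar‖ ^ 2
        + 2 * m * (inner ℝ (g y) (y - ystar) : ℝ) - ‖g y‖ ^ 2 ≥ 0 ∧
      2 * (L - m) * (f ystar - f y) - m * L * ‖y - ystar‖ ^ 2
        + 2 * L * (inner ℝ (g y) (y - ystar) : ℝ) - ‖g y‖ ^ 2 ≥ 0 := by
  intro y
  have hK : (0:ℝ) ≤ L - m := by linarith
  have hL0 : (0:ℝ) ≤ L := by linarith
  set h : EuclideanSpace ℝ (Fin d) → ℝ := fun x => f x - m / 2 * ‖x‖ ^ 2 with hh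
  set Gh : EuclideanSpace ℝ (Fin d) → EuclideanSpace ℝ (Fin d) :=
    fun x => g x - m • x with hGhdef
  have hGh : ∀ x, HasGradientAt h (Gh x) x := by
    intro x
    rw [hasGradientAt_iff_hasFDerivAt]
    have h1 := hasGradientAt_iff_hasFDerivAt.mp (hg x)
    have h2 := hasGradientAt_iff_hasFDerivAt.mp (hasGradientAt_half_norm_sq m x)
    have h3 := h1.sub h2
    simpa [hh, hGhdef, map_sub, Pi.sub_def] using h3
  have hdesc := descent_s18 hL0 hg hlip
  have hub : ∀ a b, h a ≤ h b + ⟪Gh b, a - b⟫ + (L - m) / 2 * ‖a - b‖ ^ 2 := by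
    intro a b
    have h1 := hdesc a b
    have e1 : ⟪Gh b, a - b⟫ = ⟪g b, a - b⟫ - m * ⟪b, a - b⟫ := by
      simp only [hGhdef, inner_sub_left, real_inner_smul_left]
    have id1 : ‖a - b‖ ^ 2 = ‖a‖ ^ 2 - 2 * ⟪a, b⟫ + ‖b‖ ^ 2 := norm_sub_sq_real a b
    have id2 : ⟪b, a - b⟫ = ⟪a, b⟫ - ‖b‖ ^ 2 := by
      rw [inner_sub_right, real_inner_comm, real_inner_self_eq_norm_sq]
    have eha : h a = f a - m / 2 * ‖a‖ ^ 2 := rfl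
    have ehb : h b = f b - m / 2 * ‖b‖ ^ 2 := rfl
    nlinarith [h1, e1, id1, id2, eha, ehb]
  have hco := cocoercive hK hsc hGh hub
  have k1 := hco y ystar
  have k2 := hco ystar y
  have hGyy : Gh y - Gh ystar = g y - m • (y - ystar) := by
    simp [hGhdef, hstar, smul_sub]; abel
  have hGyy' : Gh ystar - Gh y = -(g y - m • (y - ystar)) := by
    rw [← hGyy]; abel
  rw [hGyy] at k1
  rw [hGyy', norm_neg] at k2
  have exp1 : ‖g y - m • (y - ystar)‖ ^ 2
      = ‖g y‖ ^ 2 - 2 * m * ⟪g y, y - ystar⟫ + m ^ 2 * ‖y - ystar‖ ^ 2 := by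
    rw [norm_sub_sq_real, real_inner_smul_right, norm_smul, mul_pow, Real.norm_eq_abs,
      sq_abs]
    ring
  have e5 : ⟪Gh ystar, y - ystar⟫ = -(m * ⟪ystar, y - ystar⟫) := by
    simp only [hGhdef, hstar, zero_sub, inner_neg_left, real_inner_smul_left]
  have e6 : ⟪ystar, y - ystar⟫ = ⟪y, ystar⟫ - ‖ystar‖ ^ 2 := by
    rw [inner_sub_right, real_inner_comm, real_inner_self_eq_norm_sq]
  have e7 : ‖y - ystar‖ ^ 2 = ‖y‖ ^ 2 - 2 * ⟪y, ystar⟫ + ‖ystar‖ ^ 2 :=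
    norm_sub_sq_real y ystar
  have e8 : ⟪Gh y, ystar - y⟫
      = -⟪g y, y - ystar⟫ - m * (⟪y, ystar⟫ - ‖y‖ ^ 2) := by
    have : (ystar - y) = -(y - ystar) := by abel
    rw [this]
    simp only [hGhdef, inner_sub_left, real_inner_smul_left, inner_neg_right,
      inner_sub_right, real_inner_self_eq_norm_sq]
    ring
  have ehy : h y = f y - m / 2 * ‖y‖ ^ 2 := rfl
  have ehs : h ystar = f ystar - m / 2 * ‖ystar‖ ^ 2 := rfl
  have e7a : m * L * ‖y - ystar‖ ^ 2
      = m * L * (‖y‖ ^ 2 - 2 * ⟪y, ystar⟫ + ‖ystar‖ ^ 2) := by rw [e7]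
  have e7b : m * m * ‖y - ystar‖ ^ 2
      = m * m * (‖y‖ ^ 2 - 2 * ⟪y, ystar⟫ + ‖ystar‖ ^ 2) := by rw [e7]
  rw [exp1, ehy, ehs, e5, e6] at k1
  rw [exp1, ehy, ehs, e8] at k2
  constructor
  · linarith [k1, e7a, e7b]
  · linarith [k2, e7a, e7b]
end
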